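/- Let Z₁,…,Zₘ be positive reals, and for a threshold C with both groups {Zᵢ : Zᵢ ≤ C} and {Zᵢ : Zᵢ > C} nonempty, define g(C) = (m₁m₂/m²)|Z̄₁ − Z̄₂| where m₁, m₂ are group sizes and Z̄₁, Z̄₂ group means. Then g is maximized (among thresholds producing the same possible partitions) at C = (1/m)Σᵢ Zᵢ. -/

import Mathlib

open Finset

/-- The group of indices with observation `≤ C`. -/
noncomputable def lowGroup {m : ℕ} (Z : Fin m → ℝ) (C : ℝ) : Finset (Fin m) :=
  Finset.univ.filter (fun i => Z i ≤ C)

/-- The group of indices with observation `> C`. -/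
noncomputable def highGroup {m : ℕ} (Z : Fin m → ℝ) (C : ℝ) : Finset (Fin m) :=
  Finset.univ.filter (fun i => C < Z i)

/-- Mean of the observations over a finite set of indices. -/
noncomputable def groupMean {m : ℕ} (Z : Fin m → ℝ) (s : Finset (Fin m)) : ℝ :=
  (∑ i ∈ s, Z i) / s.card

/-- The between-group separation criterion
`g(C) = (m₁m₂/m²)|Z̄₁ − Z̄₂|` induced by threshold `C`. -/
noncomputable def sepCrit {m : ℕ} (Z : Fin m → ℝ) (C : ℝ) : ℝ :=
  ((lowGroup Z C).card * (highGroup Z C).card / (m : ℝ) ^ 2) *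
    |groupMean Z (lowGroup Z C) - groupMean Z (highGroup Z C)|

/-!
With `μ` the overall mean, `m₁ m₂ (Z̄₁ − Z̄₂) = −m ∑_{Zᵢ ≤ C} (μ − Zᵢ)`, so
`g(C) = |∑_{Zᵢ ≤ C} (μ − Zᵢ)| / m`. The deviations `μ − Zᵢ` sum to zero, so the sums over a set of
indices and over its complement are opposite, and both are at most the sum of the nonnegative
deviations, which is exactly the sum over the group `{Zᵢ ≤ μ}`.
-/

section PositivePart

variable {ι α : Type*} [AddCommGroup α] [LinearOrder α] [IsOrderedAddMonoid α]

lemma Finset.sum_le_sum_filter_nonneg [Fintype ι] (f : ι → α) (u : Finset ι) :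
    ∑ i ∈ u, f i ≤ ∑ i with 0 ≤ f i, f i := by
  calc ∑ i ∈ u, f i
      = ∑ i ∈ u with 0 ≤ f i, f i + ∑ i ∈ u with ¬0 ≤ f i, f i :=
        (sum_filter_add_sum_filter_not u _ f).symm
    _ ≤ ∑ i ∈ u with 0 ≤ f i, f i :=
        add_le_of_nonpos_right (sum_nonpos fun i hi ↦ (not_le.1 (mem_filter.1 hi).2).le)
    _ ≤ ∑ i with 0 ≤ f i, f i :=
        sum_le_sum_of_subset_of_nonneg (filter_subset_filter _ (subset_univ u))
          fun i hi _ ↦ (mem_filter.1 hi).2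

lemma Finset.abs_sum_le_sum_filter_nonneg_of_sum_eq_zero [Fintype ι] [DecidableEq ι]
    {f : ι → α} (hf : ∑ i, f i = 0) (u : Finset ι) :
    |∑ i ∈ u, f i| ≤ ∑ i with 0 ≤ f i, f i := by
  have hcompl : ∑ i ∈ uᶜ, f i = -∑ i ∈ u, f i :=
    eq_neg_of_add_eq_zero_left ((sum_compl_add_sum u f).trans hf)
  refine abs_le'.2 ⟨sum_le_sum_filter_nonneg f u, ?_⟩
  rw [← hcompl]
  exact sum_le_sum_filter_nonneg f uᶜ

end PositivePart

lemma mul_mul_abs_div_sub_div {K : Type*} [Field K] [LinearOrder K] [IsStrictOrderedRing K]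
    {a b x y : K} (ha : 0 ≤ a) (hb : 0 ≤ b)
    (hx : a = 0 → x = 0) (hy : b = 0 → y = 0) :
    a * b * |x / a - y / b| = |b * x - a * y| := by
  rcases ha.eq_or_lt with rfl | ha
  · simp [hx rfl]
  rcases hb.eq_or_lt with rfl | hb
  · simp [hy rfl]
  rw [← abs_of_pos (mul_pos ha hb), ← abs_mul]
  congr 1
  field_simp

lemma highGroup_eq_compl {m : ℕ} (Z : Fin m → ℝ) (C : ℝ) :
    highGroup Z C = (lowGroup Z C)ᶜ := by
  ext i; simp [lowGroup, highGroup, not_le]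

/-- When a group is empty both sides vanish: the left one through its factor `m₁ m₂` (the empty
group's mean is the junk value `0 / 0 = 0`), the right one as an empty sum or as the total
deviation from the mean. -/
lemma sepCrit_eq_abs_sum_mean_sub {m : ℕ} (Z : Fin m → ℝ) (C : ℝ) :
    sepCrit Z C = |∑ i ∈ lowGroup Z C, ((∑ j, Z j) / m - Z i)| / m := by
  rcases Nat.eq_zero_or_pos m with rfl | hpos
  · simp [sepCrit]
  have hm : (m : ℝ) ≠ 0 := by positivity
  set s := lowGroup Z C
  have hcard : (s.card : ℝ) + (sᶜ.card : ℝ) = m := by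
    exact_mod_cast (card_add_card_compl s).trans (Fintype.card_fin m)
  have hsum : ∑ i ∈ s, Z i + ∑ i ∈ sᶜ, Z i = ∑ j, Z j := sum_add_sum_compl s Z
  have key : (sᶜ.card : ℝ) * ∑ i ∈ s, Z i - s.card * ∑ i ∈ sᶜ, Z i
      = -(m * ∑ i ∈ s, ((∑ j, Z j) / m - Z i)) := by
    rw [sum_sub_distrib, sum_const, nsmul_eq_mul, mul_sub, mul_left_comm, mul_div_cancel₀ _ hm]
    linear_combination (∑ i ∈ s, Z i) * hcard - (s.card : ℝ) * hsum
  have hempty {t : Finset (Fin m)} (ht : (t.card : ℝ) = 0) : ∑ i ∈ t, Z i = 0 := by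
    rw [(card_eq_zero (s := t)).1 (by exact_mod_cast ht), sum_empty]
  calc sepCrit Z C
      = s.card * sᶜ.card * |groupMean Z s - groupMean Z sᶜ| / (m : ℝ) ^ 2 := by
        rw [sepCrit, highGroup_eq_compl]; ring
    _ = |(sᶜ.card : ℝ) * ∑ i ∈ s, Z i - s.card * ∑ i ∈ sᶜ, Z i| / (m : ℝ) ^ 2 := by
        rw [groupMean, groupMean, mul_mul_abs_div_sub_div (by positivity) (by positivity)
          hempty hempty]
    _ = |∑ i ∈ s, ((∑ j, Z j) / m - Z i)| / m := by
        rw [key, abs_neg, abs_mul, Nat.abs_cast]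
        field_simp

theorem sepCrit_maximized_at_mean_general {m : ℕ} (Z : Fin m → ℝ) :
    ∀ C : ℝ, (lowGroup Z C).Nonempty → (highGroup Z C).Nonempty →
      sepCrit Z C ≤ sepCrit Z ((∑ i, Z i) / m) := by
  intro C _ _
  rw [sepCrit_eq_abs_sum_mean_sub, sepCrit_eq_abs_sum_mean_sub]
  set μ := (∑ i, Z i) / m
  have hmean : ∑ i, (μ - Z i) = 0 := by
    have hμ : μ = univ.expect Z := by rw [Fintype.expect_eq_sum_div_card, Fintype.card_fin]
    simpa [hμ, Fintype.balance_apply] using congrArg Neg.neg (Fintype.sum_balance Z)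
  have hlow : lowGroup Z μ = ({i | 0 ≤ μ - Z i} : Finset (Fin m)) := by
    ext i; simp [lowGroup]
  rw [hlow]
  gcongr ?_ / _
  exact (abs_sum_le_sum_filter_nonneg_of_sum_eq_zero hmean _).trans (le_abs_self _)

/-- Among thresholds producing two nonempty groups, `g(C) = (m₁m₂/m²)|Z̄₁ − Z̄₂|`
is maximized at `C = (1/m) Σᵢ Zᵢ`, the overall mean. -/
theorem sepCrit_maximized_at_mean {m : ℕ} (Z : Fin m → ℝ) (hZ : ∀ i, 0 < Z i)
    (hlow : (lowGroup Z ((∑ i, Z i) / m)).Nonempty)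
    (hhigh : (highGroup Z ((∑ i, Z i) / m)).Nonempty) :
    ∀ C : ℝ, (lowGroup Z C).Nonempty → (highGroup Z C).Nonempty →
      sepCrit Z C ≤ sepCrit Z ((∑ i, Z i) / m) :=
  sepCrit_maximized_at_mean_general Z
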